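/- arXiv:1810.03865 — 2 statements merged into one kernel-verified Lean document; each statement's English description precedes it below -/
import Mathlib

section
/- Let G be a finite simple graph with edge-connectivity λ, and let X₁, X₂, X₃ be nonempty sets partitioning V(G) such that d(X₁) = d(X₂) = d(X₃) = λ. Then d(X₁,X₂) = d(X₂,X₃) = d(X₁,X₃) = λ/2; in particular, λ is even. -/
/- Summing the three equations d(Xᵢ) = d(Xᵢ,Xⱼ) + d(Xᵢ,Xₖ) = λ gives 2(d(X₁,X₂) + d(X₂,X₃) + d(X₁,X₃))
= 3λ; subtracting each equation from this, every d(Xᵢ,Xⱼ) is λ/2. -/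

open scoped Classical

/-- `d(X)`: the number of edges of `G` with exactly one endpoint in `X`.
Each crossing edge `uv` (with `u ∈ X`, `v ∉ X`) is counted once, as the
ordered pair `(u, v)`. -/
noncomputable def cutSize {V : Type*} [Fintype V] (G : SimpleGraph V)
    (X : Finset V) : ℕ :=
  (Finset.univ.filter fun p : V × V => p.1 ∈ X ∧ p.2 ∉ X ∧ G.Adj p.1 p.2).card

/-- `lam` is the edge-connectivity of `G`: the minimum of `d(X)` over all
`∅ ≠ X ⊊ V`. -/
def IsEdgeConn {V : Type*} [Fintype V] (G : SimpleGraph V) (lam : ℕ) : Prop :=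
  (∀ X : Finset V, X.Nonempty → X ≠ Finset.univ → lam ≤ cutSize G X) ∧
  ∃ X : Finset V, X.Nonempty ∧ X ≠ Finset.univ ∧ cutSize G X = lam

/-- `X` is a min-cut of `G` (whose edge-connectivity is `lam`). -/
def IsMinCut {V : Type*} [Fintype V] (G : SimpleGraph V) (lam : ℕ)
    (X : Finset V) : Prop :=
  X.Nonempty ∧ X ≠ Finset.univ ∧ cutSize G X = lam

/-- `X` is a non-trivial min-cut: a min-cut with `2 ≤ |X| ≤ |V| - 2`. -/
def IsNontrivialMinCut {V : Type*} [Fintype V] (G : SimpleGraph V) (lam : ℕ)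
    (X : Finset V) : Prop :=
  IsMinCut G lam X ∧ 2 ≤ X.card ∧ X.card ≤ Fintype.card V - 2

/-- `d(X,Y)`: for disjoint `X`, `Y`, the number of edges of `G` with one
endpoint in `X` and one endpoint in `Y`. -/
noncomputable def crossCount {V : Type*} [Fintype V] (G : SimpleGraph V)
    (X Y : Finset V) : ℕ :=
  (Finset.univ.filter fun p : V × V => p.1 ∈ X ∧ p.2 ∈ Y ∧ G.Adj p.1 p.2).card

variable {V : Type*} [Fintype V] (G : SimpleGraph V)

lemma crossCount_comm (X Y : Finset V) : crossCount G X Y = crossCount G Y X := by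
  unfold crossCount
  apply Finset.card_nbij' Prod.swap Prod.swap <;>
    simp +contextual [G.adj_comm, and_left_comm, Set.MapsTo, Set.LeftInvOn]

lemma cutSize_eq_crossCount_compl (X : Finset V) : cutSize G X = crossCount G X Xᶜ := by
  simp only [cutSize, crossCount, Finset.mem_compl]

lemma crossCount_union_right (X : Finset V) {Y Z : Finset V} (hYZ : Disjoint Y Z) :
    crossCount G X (Y ∪ Z) = crossCount G X Y + crossCount G X Z := by
  unfold crossCount
  rw [← Finset.card_union_of_disjoint (Finset.disjoint_filter_filter' _ _ ?_),
    ← Finset.filter_or]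
  · congr 1
    ext p
    simp only [Finset.mem_filter, Finset.mem_union]
    tauto
  · intro P hY hZ p hp
    exact Finset.disjoint_left.mp hYZ (hY p hp).2.1 (hZ p hp).2.1

lemma cutSize_eq_crossCount_add {X Y Z : Finset V} (hYZ : Disjoint Y Z) (hX : Xᶜ = Y ∪ Z) :
    cutSize G X = crossCount G X Y + crossCount G X Z := by
  rw [cutSize_eq_crossCount_compl, hX, crossCount_union_right G X hYZ]

lemma compl_eq_union_of_partition {X Y Z : Finset V} (hXY : Disjoint X Y) (hXZ : Disjoint X Z)
    (hcover : X ∪ Y ∪ Z = Finset.univ) : Xᶜ = Y ∪ Z :=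
  compl_unique (disjoint_iff.mp (Finset.disjoint_union_right.mpr ⟨hXY, hXZ⟩))
    ((Finset.union_assoc X Y Z).symm.trans hcover)

theorem statement4_general (V : Type) [Fintype V] (G : SimpleGraph V) (lam : ℕ)
    (X₁ X₂ X₃ : Finset V)
    (h12 : Disjoint X₁ X₂) (h13 : Disjoint X₁ X₃) (h23 : Disjoint X₂ X₃)
    (hcover : X₁ ∪ X₂ ∪ X₃ = Finset.univ)
    (hc1 : cutSize G X₁ = lam) (hc2 : cutSize G X₂ = lam)
    (hc3 : cutSize G X₃ = lam) :
    2 * crossCount G X₁ X₂ = lam ∧ 2 * crossCount G X₂ X₃ = lam ∧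
      2 * crossCount G X₁ X₃ = lam ∧ Even lam := by
  have hX₁ : X₁ᶜ = X₂ ∪ X₃ := compl_eq_union_of_partition h12 h13 hcover
  have hX₂ : X₂ᶜ = X₁ ∪ X₃ :=
    compl_eq_union_of_partition h12.symm h23 (by rwa [Finset.union_comm X₂])
  have hX₃ : X₃ᶜ = X₁ ∪ X₂ :=
    compl_eq_union_of_partition h13.symm h23.symm (by rwa [Finset.union_assoc, Finset.union_comm])
  have e₁ := cutSize_eq_crossCount_add G h23 hX₁
  have e₂ := cutSize_eq_crossCount_add G h13 hX₂
  have e₃ := cutSize_eq_crossCount_add G h12 hX₃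
  rw [crossCount_comm G X₂ X₁] at e₂
  rw [crossCount_comm G X₃ X₁, crossCount_comm G X₃ X₂] at e₃
  refine ⟨by omega, by omega, by omega, ⟨crossCount G X₂ X₃, by omega⟩⟩

/-- If `X₁, X₂, X₃` are nonempty sets partitioning the vertex
set of a finite simple graph `G` with edge-connectivity `λ`, and
`d(X₁) = d(X₂) = d(X₃) = λ`, then `d(X₁,X₂) = d(X₂,X₃) = d(X₁,X₃) = λ/2`;
in particular `λ` is even. (The equalities are stated as `2·d(Xᵢ,Xⱼ) = λ`.) -/
theorem statement4 (V : Type) [Fintype V] (G : SimpleGraph V) (lam : ℕ)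
    (hconn : IsEdgeConn G lam)
    (X₁ X₂ X₃ : Finset V)
    (h1 : X₁.Nonempty) (h2 : X₂.Nonempty) (h3 : X₃.Nonempty)
    (h12 : Disjoint X₁ X₂) (h13 : Disjoint X₁ X₃) (h23 : Disjoint X₂ X₃)
    (hcover : X₁ ∪ X₂ ∪ X₃ = Finset.univ)
    (hc1 : cutSize G X₁ = lam) (hc2 : cutSize G X₂ = lam)
    (hc3 : cutSize G X₃ = lam) :
    2 * crossCount G X₁ X₂ = lam ∧ 2 * crossCount G X₂ X₃ = lam ∧
      2 * crossCount G X₁ X₃ = lam ∧ Even lam :=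
  statement4_general V G lam X₁ X₂ X₃ h12 h13 h23 hcover hc1 hc2 hc3
end

section
/- Let G be a finite simple graph with minimum degree δ > 6 and edge-connectivity λ ≤ δ. If W ⊆ V(G) satisfies |W| ≥ 3 and d(W) ≤ 2λ, then |W| ≥ δ − 1. -/
/-!
Every vertex of `W` has at least `δ` neighbours, at most `|W| - 1` of them inside `W`, so
`δ |W| ≤ |W| (|W| - 1) + d(W) ≤ |W| (|W| - 1) + 2δ`. For `3 ≤ |W| ≤ δ - 2` this forces `δ ≤ 6`.
-/

open scoped Classical

namespace SimpleGraph

variable {V : Type*} [Fintype V] (G : SimpleGraph V) (X : Finset V)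

theorem cutSize_eq_sum_card_neighborFinset_sdiff :
    cutSize G X = ∑ v ∈ X, (G.neighborFinset v \ X).card := by
  have : (Finset.univ.filter fun p : V × V => p.1 ∈ X ∧ p.2 ∉ X ∧ G.Adj p.1 p.2) =
      (X.sigma fun v => G.neighborFinset v \ X).map (Equiv.sigmaEquivProd V V).toEmbedding := by
    ext ⟨v, w⟩
    simp [and_comm]
  rw [cutSize, this, Finset.card_map, Finset.card_sigma]

theorem degree_le_card_sub_one_add {v : V} (hv : v ∈ X) :
    G.degree v ≤ (X.card - 1) + (G.neighborFinset v \ X).card := by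
  rw [← card_neighborFinset_eq_degree, ← Finset.card_inter_add_card_sdiff _ X,
    ← Finset.card_erase_of_mem hv]
  gcongr
  intro w hw
  rw [Finset.mem_inter, mem_neighborFinset] at hw
  exact Finset.mem_erase.mpr ⟨hw.1.ne.symm, hw.2⟩

theorem minDegree_mul_card_le :
    G.minDegree * X.card ≤ X.card * (X.card - 1) + cutSize G X := by
  calc G.minDegree * X.card = ∑ _v ∈ X, G.minDegree := by simp [mul_comm]
    _ ≤ ∑ v ∈ X, ((X.card - 1) + (G.neighborFinset v \ X).card) :=
      Finset.sum_le_sum fun v hv =>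
        (G.minDegree_le_degree v).trans (G.degree_le_card_sub_one_add X hv)
    _ = X.card * (X.card - 1) + cutSize G X := by
      rw [Finset.sum_add_distrib, cutSize_eq_sum_card_neighborFinset_sdiff, Finset.sum_const,
        smul_eq_mul]

end SimpleGraph

theorem sub_one_le_of_mul_le_mul_sub_one_add_two_mul {k δ : ℕ} (hk : 3 ≤ k) (hδ : 6 < δ)
    (h : δ * k ≤ k * (k - 1) + 2 * δ) : δ - 1 ≤ k := by
  obtain ⟨m, rfl⟩ : ∃ m, k = m + 3 := ⟨k - 3, by omega⟩
  by_contra! hlt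
  have hδm : (m + 5) * (m + 1) ≤ δ * (m + 1) := Nat.mul_le_mul_right _ (by omega)
  simp only [show m + 3 - 1 = m + 2 by omega] at h
  nlinarith

theorem statement14_general (V : Type) [Fintype V] (G : SimpleGraph V) (δ lam : ℕ)
    (hδ : G.minDegree = δ) (h6 : 6 < δ)
    (hlamδ : lam ≤ δ)
    (W : Finset V) (hW3 : 3 ≤ W.card) (hdW : cutSize G W ≤ 2 * lam) :
    δ - 1 ≤ W.card := by
  have hcount := G.minDegree_mul_card_le W
  rw [hδ] at hcount
  exact sub_one_le_of_mul_le_mul_sub_one_add_two_mul hW3 h6 (by omega)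

/-- Let `G` be a finite simple graph with minimum degree
`δ > 6` and edge-connectivity `λ ≤ δ`. If `W ⊆ V(G)` satisfies `|W| ≥ 3` and
`d(W) ≤ 2λ`, then `|W| ≥ δ − 1`. -/
theorem statement14 (V : Type) [Fintype V] (G : SimpleGraph V) (δ lam : ℕ)
    (hδ : G.minDegree = δ) (h6 : 6 < δ)
    (hconn : IsEdgeConn G lam) (hlamδ : lam ≤ δ)
    (W : Finset V) (hW3 : 3 ≤ W.card) (hdW : cutSize G W ≤ 2 * lam) :
    δ - 1 ≤ W.card :=
  statement14_general V G δ lam hδ h6 hlamδ W hW3 hdW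
end
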